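/- For the plane-fronted metric, the null vector k is covariantly constant (D_α k_β = 0 for all α, β at every point of ℝ^n) if and only if ∂_0 h = 0 identically on ℝ^n, i.e. if and only if h does not depend on the coordinate u. (When this holds the metric is called a pp-wave: plane-fronted with parallel rays.) -/

import Mathlib

noncomputable section

/-- Partial derivative of a function on `ℝ^n` in the `μ`-th coordinate direction. -/
def pd {n : ℕ} (μ : Fin n) (f : (Fin n → ℝ) → ℝ) : (Fin n → ℝ) → ℝ :=
  fun p => fderiv ℝ f p (Pi.single μ 1)

/-- Embedding of a transverse index `a ∈ {0,…,m-1}` as the coordinate index `a+2`. -/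
def tIdx {m : ℕ} (a : Fin m) : Fin (m + 2) := a.succ.succ

/-- Covariant components `g_{αβ}` of the plane-fronted metric. -/
def gLow (m : ℕ) (η : Matrix (Fin m) (Fin m) ℝ) (h : (Fin (m + 2) → ℝ) → ℝ)
    (p : Fin (m + 2) → ℝ) (α β : Fin (m + 2)) : ℝ :=
  (if (α = 0 ∧ β = 1) ∨ (α = 1 ∧ β = 0) then 1 else 0)
    + (if α = 1 ∧ β = 1 then 2 * h p else 0)
    + ∑ a : Fin m, ∑ b : Fin m, if α = tIdx a ∧ β = tIdx b then η a b else 0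

/-- Contravariant components `g^{αβ}` of the plane-fronted metric. -/
def gUp (m : ℕ) (ηinv : Matrix (Fin m) (Fin m) ℝ) (h : (Fin (m + 2) → ℝ) → ℝ)
    (p : Fin (m + 2) → ℝ) (α β : Fin (m + 2)) : ℝ :=
  (if (α = 0 ∧ β = 1) ∨ (α = 1 ∧ β = 0) then 1 else 0)
    + (if α = 0 ∧ β = 0 then -(2 * h p) else 0)
    + ∑ a : Fin m, ∑ b : Fin m, if α = tIdx a ∧ β = tIdx b then ηinv a b else 0

/-- Christoffel symbols `Γ^α_{βγ}` of the plane-fronted metric. -/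
def chr (m : ℕ) (η ηinv : Matrix (Fin m) (Fin m) ℝ) (h : (Fin (m + 2) → ℝ) → ℝ)
    (p : Fin (m + 2) → ℝ) (α β γ : Fin (m + 2)) : ℝ :=
  (1 / 2) * ∑ δ : Fin (m + 2), gUp m ηinv h p α δ *
    (pd β (fun q => gLow m η h q δ γ) p + pd γ (fun q => gLow m η h q δ β) p
      - pd δ (fun q => gLow m η h q β γ) p)

/-- Riemann curvature tensor `R^α_{βγδ}` of the plane-fronted metric. -/
def riem (m : ℕ) (η ηinv : Matrix (Fin m) (Fin m) ℝ) (h : (Fin (m + 2) → ℝ) → ℝ)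
    (p : Fin (m + 2) → ℝ) (α β γ δ : Fin (m + 2)) : ℝ :=
  pd γ (fun q => chr m η ηinv h q α δ β) p - pd δ (fun q => chr m η ηinv h q α γ β) p
    + ∑ ε : Fin (m + 2), (chr m η ηinv h p α γ ε * chr m η ηinv h p ε δ β
      - chr m η ηinv h p α δ ε * chr m η ηinv h p ε γ β)

/-- Ricci tensor `R_{βδ}` of the plane-fronted metric. -/
def ricci (m : ℕ) (η ηinv : Matrix (Fin m) (Fin m) ℝ) (h : (Fin (m + 2) → ℝ) → ℝ)
    (p : Fin (m + 2) → ℝ) (β δ : Fin (m + 2)) : ℝ :=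
  ∑ α : Fin (m + 2), riem m η ηinv h p α β α δ

/-- Contravariant components `k^α = δ^α_0` of the null vector `k`. -/
def kUp {m : ℕ} (α : Fin (m + 2)) : ℝ := if α = 0 then 1 else 0

/-- Covariant components `k_α = δ^1_α` of the null vector `k`. -/
def kDown {m : ℕ} (α : Fin (m + 2)) : ℝ := if α = 1 then 1 else 0

/-- Covariant derivative `D_α k_β = −Σ_γ Γ^γ_{αβ} k_γ` of the constant-component
null covector `k`. -/
def covDk (m : ℕ) (η ηinv : Matrix (Fin m) (Fin m) ℝ) (h : (Fin (m + 2) → ℝ) → ℝ)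
    (p : Fin (m + 2) → ℝ) (α β : Fin (m + 2)) : ℝ :=
  - ∑ γ : Fin (m + 2), chr m η ηinv h p γ α β * kDown γ

lemma tIdx_ne_zero {m : ℕ} (a : Fin m) : tIdx a ≠ 0 := by
  simp [tIdx, Fin.ext_iff, Fin.val_succ]

lemma tIdx_ne_one {m : ℕ} (a : Fin m) : tIdx a ≠ 1 := by
  simp [tIdx, Fin.ext_iff, Fin.val_succ, Fin.val_one]

lemma pd_gLow (m : ℕ) (η : Matrix (Fin m) (Fin m) ℝ) (h : (Fin (m + 2) → ℝ) → ℝ)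
    (hh : ContDiff ℝ (⊤ : ℕ∞) h) (μ δ γ : Fin (m + 2)) (p : Fin (m + 2) → ℝ) :
    pd μ (fun q => gLow m η h q δ γ) p
      = if δ = 1 ∧ γ = 1 then 2 * pd μ h p else 0 := by
  by_cases hc : δ = 1 ∧ γ = 1
  · simp only [gLow, if_pos hc, pd]
    rw [show (fun q => (if (δ = 0 ∧ γ = 1) ∨ (δ = 1 ∧ γ = 0) then (1:ℝ) else 0)
          + 2 * h q
          + ∑ a : Fin m, ∑ b : Fin m, if δ = tIdx a ∧ γ = tIdx b then η a b else 0)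
        = (fun q => ((if (δ = 0 ∧ γ = 1) ∨ (δ = 1 ∧ γ = 0) then (1:ℝ) else 0)
          + (∑ a : Fin m, ∑ b : Fin m, if δ = tIdx a ∧ γ = tIdx b then η a b else 0))
          + 2 * h q) from by funext q; ring]
    rw [fderiv_const_add, fderiv_const_mul (hh.differentiable (by simp) p)]
    simp
  · simp only [gLow, if_neg hc, add_zero, if_neg hc, pd]
    rw [fderiv_const_apply]
    simp

lemma gUp_one (m : ℕ) (ηinv : Matrix (Fin m) (Fin m) ℝ) (h : (Fin (m + 2) → ℝ) → ℝ)
    (p : Fin (m + 2) → ℝ) (δ : Fin (m + 2)) :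
    gUp m ηinv h p 1 δ = if δ = 0 then 1 else 0 := by
  have h1 : ((1 : Fin (m + 2)) = 0) = False := by
    simp [Fin.ext_iff]
  have h2 : ∀ a : Fin m, ((1 : Fin (m + 2)) = tIdx a) = False := by
    intro a; simp [eq_comm, tIdx_ne_one a]
  simp [gUp, h1, h2]

lemma covDk_eq (m : ℕ) (η ηinv : Matrix (Fin m) (Fin m) ℝ)
    (h : (Fin (m + 2) → ℝ) → ℝ) (hh : ContDiff ℝ (⊤ : ℕ∞) h)
    (p : Fin (m + 2) → ℝ) (α β : Fin (m + 2)) :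
    covDk m η ηinv h p α β = if α = 1 ∧ β = 1 then pd (0 : Fin (m + 2)) h p else 0 := by
  have hsum : covDk m η ηinv h p α β = - chr m η ηinv h p 1 α β := by
    unfold covDk kDown
    rw [Finset.sum_eq_single (1 : Fin (m + 2))]
    · simp
    · intro b _ hb; simp [hb]
    · simp
  rw [hsum]
  unfold chr
  have : ∀ δ : Fin (m + 2), gUp m ηinv h p 1 δ *
      (pd α (fun q => gLow m η h q δ β) p + pd β (fun q => gLow m η h q δ α) p
        - pd δ (fun q => gLow m η h q α β) p)
      = if δ = 0 then
          (pd α (fun q => gLow m η h q 0 β) p + pd β (fun q => gLow m η h q 0 α) p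
            - pd (0 : Fin (m+2)) (fun q => gLow m η h q α β) p) else 0 := by
    intro δ
    rw [gUp_one]
    by_cases hδ : δ = 0
    · subst hδ; simp
    · simp [hδ]
  rw [Finset.sum_congr rfl (fun δ _ => this δ), Finset.sum_ite_eq']
  have h01 : ((0 : Fin (m + 2)) = 1) = False := by simp [Fin.ext_iff]
  rw [pd_gLow m η h hh, pd_gLow m η h hh, pd_gLow m η h hh]
  simp only [h01, false_and, if_false, Finset.mem_univ, if_true]
  by_cases hc : α = 1 ∧ β = 1
  · rw [if_pos hc, if_pos hc]; ring
  · rw [if_neg hc, if_neg hc]; ring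

/-- the null vector `k` is covariantly constant iff `∂_0 h = 0`
identically, i.e. iff `h` does not depend on `u` (the pp-wave condition). -/
theorem stmt4 (m : ℕ) (hm : 1 ≤ m) (η ηinv : Matrix (Fin m) (Fin m) ℝ)
    (hηsymm : η.IsSymm) (hη : η * ηinv = 1) (hη' : ηinv * η = 1)
    (h : (Fin (m + 2) → ℝ) → ℝ) (hh : ContDiff ℝ (⊤ : ℕ∞) h) :
    (∀ (p : Fin (m + 2) → ℝ) (α β : Fin (m + 2)), covDk m η ηinv h p α β = 0)
      ↔ (∀ p : Fin (m + 2) → ℝ, pd (0 : Fin (m + 2)) h p = 0) := by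
  constructor
  · intro H p
    have := H p 1 1
    rwa [covDk_eq m η ηinv h hh, if_pos ⟨rfl, rfl⟩] at this
  · intro H p α β
    rw [covDk_eq m η ηinv h hh]
    by_cases hc : α = 1 ∧ β = 1
    · rw [if_pos hc]; exact H p
    · rw [if_neg hc]
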